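/- ξ₉ = 9: for t ∈ [2/5, 3/5] the simplex S(t) ⊂ R⁹ with vertices (1,0,0,0,0,0,0,0,1), (1,1,0,1,t,1,1,0,0), (1,0,1,1,1−t,0,1,1,0), (0,1,1,1,t,0,0,1,1), (0,1,1,0,1−t,1,0,0,0), (0,0,0,1,t,0,1,1,0), (1,1,0,0,1−t,1,1,1,0), (0,1,1,0,t,1,1,0,1), (0,0,1,1,1−t,1,0,1,1), (1,0,0,0,1,0,0,0,1) is contained in Q₉ = [0,1]⁹ and satisfies ξ(S(t)) = 9, and every nondegenerate simplex T ⊆ Q₉ satisfies ξ(T) ≥ 9. -/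

import Mathlib

open Finset MeasureTheory

/-- The unit cube `[0,1]^n` in `ℝ^n`. -/
def unitCube (n : ℕ) : Set (Fin n → ℝ) := {x | ∀ i, 0 ≤ x i ∧ x i ≤ 1}

/-- The set of vertices of the unit cube, i.e. `{0,1}^n`. -/
def cubeVerts (n : ℕ) : Set (Fin n → ℝ) := {x | ∀ i, x i = 0 ∨ x i = 1}

/-- The (solid) simplex spanned by `n+1` points. -/
def simplexSet {n : ℕ} (v : Fin (n + 1) → (Fin n → ℝ)) : Set (Fin n → ℝ) :=
  convexHull ℝ (Set.range v)

/-- The centroid (center of gravity) of the simplex with vertices `v`. -/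
noncomputable def simplexCentroid {n : ℕ} (v : Fin (n + 1) → (Fin n → ℝ)) : Fin n → ℝ :=
  ((n : ℝ) + 1)⁻¹ • ∑ j, v j

/-- The homothety of the simplex with vertices `v`, with center the centroid and ratio `σ`. -/
noncomputable def homSimplex {n : ℕ} (v : Fin (n + 1) → (Fin n → ℝ)) (σ : ℝ) : Set (Fin n → ℝ) :=
  (fun x => simplexCentroid v + σ • (x - simplexCentroid v)) '' simplexSet v

/-- `ξ(S) = min {σ ≥ 1 : Q_n ⊆ σS}`. -/
noncomputable def xiVal {n : ℕ} (v : Fin (n + 1) → (Fin n → ℝ)) : ℝ :=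
  sInf {σ : ℝ | 1 ≤ σ ∧ unitCube n ⊆ homSimplex v σ}

/-- A function `ℝ^n → ℝ` is an affine polynomial of degree at most 1. -/
def IsAffinePoly {n : ℕ} (f : (Fin n → ℝ) → ℝ) : Prop :=
  ∃ a : Fin n → ℝ, ∃ b : ℝ, ∀ x, f x = ∑ i, a i * x i + b

/-- `lam` is the family of basic Lagrange polynomials of the simplex with vertices `v`. -/
def IsLagrangeBasis {n : ℕ} (v : Fin (n + 1) → (Fin n → ℝ))
    (lam : Fin (n + 1) → (Fin n → ℝ) → ℝ) : Prop :=
  (∀ j, IsAffinePoly (lam j)) ∧ ∀ j k, lam j (v k) = if j = k then 1 else 0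

/-- The `i`-th axial diameter of a set `S ⊆ ℝ^n`: the supremum of lengths of segments
in `S` parallel to the `i`-th coordinate axis. -/
noncomputable def axialDiam {n : ℕ} (S : Set (Fin n → ℝ)) (i : Fin n) : ℝ :=
  sSup {t : ℝ | ∃ x ∈ S, ∃ y ∈ S, (∀ k, k ≠ i → x k = y k) ∧ y i - x i = t}

/-- The family of simplices `S(t) ⊂ ℝ⁹`. -/
noncomputable def S9verts (t : ℝ) : Fin 10 → (Fin 9 → ℝ) :=
  ![![1, 0, 0, 0, 0, 0, 0, 0, 1], ![1, 1, 0, 1, t, 1, 1, 0, 0],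
    ![1, 0, 1, 1, 1 - t, 0, 1, 1, 0], ![0, 1, 1, 1, t, 0, 0, 1, 1],
    ![0, 1, 1, 0, 1 - t, 1, 0, 0, 0], ![0, 0, 0, 1, t, 0, 1, 1, 0],
    ![1, 1, 0, 0, 1 - t, 1, 1, 1, 0], ![0, 1, 1, 0, t, 1, 1, 0, 1],
    ![0, 0, 1, 1, 1 - t, 1, 0, 1, 1], ![1, 0, 0, 0, 1, 0, 0, 0, 1]]

/-!
Let `λ₀, …, λₙ` be the barycentric coordinates of a nondegenerate simplex `S ⊆ Qₙ`. Since they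
are affine and equal `1/(n+1)` at the centroid, `x ∈ σS` iff `λⱼ(x) ≥ (1 - σ)/(n+1)` for all `j`,
so `ξ(S) = max (1, maxⱼ (1 - (n+1) mⱼ))` with `mⱼ = λⱼ(0) - ∑ᵢ (∂ᵢλⱼ)⁻` the minimum of `λⱼ`
over the cube. For each axis `i`, the numbers `∂ᵢλⱼ` sum to `0` over `j` and satisfy
`∑ⱼ ∂ᵢλⱼ · vⱼᵢ = 1` with all `vⱼᵢ ∈ [0,1]`, so their negative parts sum to at least `1`
(this is `1/dᵢ(S) ≥ 1`). Hence `∑ⱼ mⱼ ≤ 1 - n` and `ξ(S) ≥ n`. For `S(t)` the basic Lagrange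
polynomials are explicit and each is `≥ -4/5` on `Q₉`, which gives `ξ(S(t)) ≤ 1 + 10 · 4/5 = 9`.
-/

lemma unitCube_eq_Icc (n : ℕ) : unitCube n = Set.Icc 0 1 := by
  ext x
  simp only [unitCube, Set.mem_ofPred_eq, Set.mem_Icc, Pi.le_def, Pi.zero_apply, Pi.one_apply,
    forall_and]

section IsAffinePoly

variable {n : ℕ} {f : (Fin n → ℝ) → ℝ}

lemma AffineMap.isAffinePoly (g : (Fin n → ℝ) →ᵃ[ℝ] ℝ) : IsAffinePoly g := by
  refine ⟨fun i => g.linear (Pi.single i 1), g 0, fun x => ?_⟩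
  have hx : x = ∑ i, x i • Pi.single i (1 : ℝ) := by simpa using pi_eq_sum_univ' x
  conv_lhs => rw [← vsub_vadd x 0, g.map_vadd, vsub_eq_sub, sub_zero, hx, map_sum]
  simp [mul_comm]

lemma IsAffinePoly.apply_sum_smul (hf : IsAffinePoly f) {ι : Type*} (s : Finset ι)
    (μ : ι → ℝ) (p : ι → Fin n → ℝ) :
    f (∑ e ∈ s, μ e • p e) = ∑ e ∈ s, μ e * f (p e) + (1 - ∑ e ∈ s, μ e) * f 0 := by
  obtain ⟨a, c, hf⟩ := hf
  simp only [hf, Finset.sum_apply, Pi.smul_apply, smul_eq_mul, Finset.mul_sum, Pi.zero_apply,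
    mul_zero, Finset.sum_const_zero, zero_add, mul_add, Finset.sum_add_distrib, sub_mul, one_mul,
    Finset.sum_mul]
  rw [Finset.sum_comm]
  simp only [mul_left_comm]
  ring

end IsAffinePoly

section cubeMin

variable {n : ℕ}

/-- For affine `f`, the minimum of `f` over `unitCube n`, attained at the vertex with `xᵢ = 1`
exactly where the `i`-th coefficient of `f` is negative. -/
def cubeMin (f : (Fin n → ℝ) → ℝ) : ℝ := f 0 - ∑ i, (f (Pi.single i 1) - f 0)⁻

lemma cubeMin_eq {f : (Fin n → ℝ) → ℝ} {a : Fin n → ℝ} {c : ℝ}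
    (hf : ∀ x, f x = ∑ i, a i * x i + c) : cubeMin f = c - ∑ i, (a i)⁻ := by
  simp [cubeMin, hf, Pi.single_apply]

lemma neg_sum_negPart_le_sum_mul (a : Fin n → ℝ) {x : Fin n → ℝ} (hx : x ∈ unitCube n) :
    -∑ i, (a i)⁻ ≤ ∑ i, a i * x i := by
  rw [← Finset.sum_neg_distrib]
  refine Finset.sum_le_sum fun i _ => ?_
  obtain ⟨h0, h1⟩ := hx i
  rcases le_total 0 (a i) with ha | ha
  · rw [negPart_eq_zero.2 ha, neg_zero]; positivity
  · rw [negPart_eq_neg.2 ha, neg_neg]; nlinarith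

lemma sum_mul_indicator_neg (a : Fin n → ℝ) :
    ∑ i, a i * (if a i < 0 then 1 else 0) = -∑ i, (a i)⁻ := by
  rw [← Finset.sum_neg_distrib]
  refine Finset.sum_congr rfl fun i _ => ?_
  split_ifs with ha
  · rw [negPart_eq_neg.2 ha.le]; ring
  · rw [negPart_eq_zero.2 (not_lt.1 ha)]; ring

variable {f : (Fin n → ℝ) → ℝ}

lemma IsAffinePoly.cubeMin_le (hf : IsAffinePoly f) {x : Fin n → ℝ} (hx : x ∈ unitCube n) :
    cubeMin f ≤ f x := by
  obtain ⟨a, c, hf⟩ := hf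
  rw [cubeMin_eq hf, hf]
  linarith [neg_sum_negPart_le_sum_mul a hx]

lemma IsAffinePoly.exists_mem_unitCube_eq_cubeMin (hf : IsAffinePoly f) :
    ∃ x ∈ unitCube n, f x = cubeMin f := by
  obtain ⟨a, c, hf⟩ := hf
  refine ⟨fun i => if a i < 0 then 1 else 0, fun i => by dsimp only; split_ifs <;> norm_num, ?_⟩
  rw [cubeMin_eq hf, hf, sum_mul_indicator_neg]
  ring

lemma IsAffinePoly.le_cubeMin_iff (hf : IsAffinePoly f) {m : ℝ} :
    m ≤ cubeMin f ↔ ∀ x ∈ unitCube n, m ≤ f x := by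
  refine ⟨fun h x hx => h.trans (hf.cubeMin_le hx), fun h => ?_⟩
  obtain ⟨x, hx, hfx⟩ := hf.exists_mem_unitCube_eq_cubeMin
  exact hfx ▸ h x hx

lemma one_le_sum_negPart {ι : Type*} (s : Finset ι) {a v : ι → ℝ} (ha : ∑ j ∈ s, a j = 0)
    (hv : ∀ j ∈ s, 0 ≤ v j ∧ v j ≤ 1) (hav : ∑ j ∈ s, a j * v j = 1) : 1 ≤ ∑ j ∈ s, (a j)⁻ := by
  have hpos : ∑ j ∈ s, a j * v j ≤ ∑ j ∈ s, (a j)⁺ := by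
    refine Finset.sum_le_sum fun j hj => ?_
    obtain ⟨h0, h1⟩ := hv j hj
    rcases le_total 0 (a j) with haj | haj
    · rw [posPart_eq_self.2 haj]; nlinarith
    · rw [posPart_eq_zero.2 haj]; nlinarith
  have hsplit : ∑ j ∈ s, (a j)⁺ - ∑ j ∈ s, (a j)⁻ = 0 := by
    rw [← Finset.sum_sub_distrib, ← ha]
    simp only [posPart_sub_negPart]
  linarith

end cubeMin

namespace AffineBasis

variable {n : ℕ} (b : AffineBasis (Fin (n + 1)) ℝ (Fin n → ℝ))

lemma coord_simplexCentroid (j : Fin (n + 1)) :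
    b.coord j (simplexCentroid b) = ((n : ℝ) + 1)⁻¹ := by
  have hw : ∑ _k : Fin (n + 1), ((n : ℝ) + 1)⁻¹ = 1 := by
    rw [Finset.sum_const, Finset.card_univ, Fintype.card_fin, nsmul_eq_mul]
    push_cast
    exact mul_inv_cancel₀ (by positivity)
  have hc : simplexCentroid b = Finset.univ.affineCombination ℝ b fun _ => ((n : ℝ) + 1)⁻¹ := by
    rw [Finset.affineCombination_eq_linear_combination _ _ _ hw, simplexCentroid, Finset.smul_sum]
  rw [hc, b.coord_apply_combination_of_mem (Finset.mem_univ j) hw]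

lemma coord_homothety_simplexCentroid (σ : ℝ) (x : Fin n → ℝ) (j : Fin (n + 1)) :
    b.coord j (simplexCentroid b + σ • (x - simplexCentroid b)) =
      ((n : ℝ) + 1)⁻¹ + σ * (b.coord j x - ((n : ℝ) + 1)⁻¹) := by
  rw [add_comm (simplexCentroid b), ← AffineMap.lineMap_apply_module', AffineMap.apply_lineMap,
    AffineMap.lineMap_apply_ring', coord_simplexCentroid]
  ring

lemma mem_homSimplex_iff {σ : ℝ} (hσ : 0 < σ) (y : Fin n → ℝ) :
    y ∈ homSimplex b σ ↔ ∀ j, (1 - σ) / (n + 1) ≤ b.coord j y := by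
  have hn : (0 : ℝ) < n + 1 := by positivity
  simp only [homSimplex, simplexSet, b.convexHull_eq_nonneg_coord, Set.mem_image,
    Set.mem_ofPred_eq]
  constructor
  · rintro ⟨x, hx, rfl⟩ j
    rw [coord_homothety_simplexCentroid, div_le_iff₀ hn]
    have := mul_nonneg hσ.le (hx j)
    field_simp
    nlinarith
  · intro hy
    set c := simplexCentroid b
    refine ⟨c + σ⁻¹ • (y - c), fun j => ?_, ?_⟩
    · rw [coord_homothety_simplexCentroid]
      have := hy j
      rw [div_le_iff₀ hn] at this
      field_simp
      nlinarith
    · rw [add_sub_cancel_left, smul_inv_smul₀ hσ.ne', add_sub_cancel]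

lemma unitCube_subset_homSimplex_iff {σ : ℝ} (hσ : 0 < σ) :
    unitCube n ⊆ homSimplex b σ ↔ ∀ j, 1 - (n + 1) * cubeMin (b.coord j) ≤ σ := by
  have hn : (0 : ℝ) < n + 1 := by positivity
  simp only [Set.subset_def, b.mem_homSimplex_iff hσ]
  refine ⟨fun h j => ?_, fun h x hx j => ?_⟩
  · have := ((b.coord j).isAffinePoly.le_cubeMin_iff).2 fun x hx => h x hx j
    rw [div_le_iff₀' hn] at this
    linarith
  · rw [div_le_iff₀' hn]
    linarith [h j, mul_le_mul_of_nonneg_left ((b.coord j).isAffinePoly.cubeMin_le hx) hn.le]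

/-- Nevskii's formula for `ξ(S)`. -/
lemma xiVal_eq :
    xiVal b = max 1 (Finset.univ.sup' Finset.univ_nonempty
      fun j => 1 - (n + 1) * cubeMin (b.coord j)) := by
  rw [xiVal, ← csInf_Ici (a := max 1 _)]
  congr 1
  ext σ
  simp only [Set.mem_ofPred_eq, Set.mem_Ici, max_le_iff, Finset.sup'_le_iff, Finset.mem_univ,
    true_implies]
  exact and_congr_right fun hσ => b.unitCube_subset_homSimplex_iff (one_pos.trans_le hσ)

lemma sum_cubeMin_coord_le (hb : ∀ k, b k ∈ unitCube n) :
    ∑ j, cubeMin (b.coord j) ≤ 1 - n := by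
  set a : Fin (n + 1) → Fin n → ℝ := fun j i => b.coord j (Pi.single i 1) - b.coord j 0
  have hcol : ∀ i, 1 ≤ ∑ j, (a j i)⁻ := by
    intro i
    refine one_le_sum_negPart _ ?_ (fun j _ => hb j i) ?_
    · simp only [a, Finset.sum_sub_distrib, sum_coord_apply_eq_one, sub_self]
    · have h1 := congrFun (b.linear_combination_coord_eq_self (Pi.single i 1)) i
      have h0 := congrFun (b.linear_combination_coord_eq_self 0) i
      simp only [Finset.sum_apply, Pi.smul_apply, smul_eq_mul, Pi.single_eq_same,
        Pi.zero_apply] at h1 h0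
      simp only [a, sub_mul, Finset.sum_sub_distrib, h1, h0, sub_zero]
  calc ∑ j, cubeMin (b.coord j) = 1 - ∑ i, ∑ j, (a j i)⁻ := by
        simp only [cubeMin, Finset.sum_sub_distrib, sum_coord_apply_eq_one, a]
        rw [Finset.sum_comm]
    _ ≤ 1 - ∑ _i : Fin n, (1 : ℝ) := by gcongr with i; exact hcol i
    _ = 1 - n := by simp

lemma natCast_le_xiVal (hb : ∀ k, b k ∈ unitCube n) : (n : ℝ) ≤ xiVal b := by
  rw [xiVal_eq]
  refine le_max_of_le_right ?_
  obtain ⟨j, -, hj⟩ := Finset.exists_le_of_sum_le (f := fun _ => (n : ℝ))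
    (g := fun j => 1 - (n + 1) * cubeMin (b.coord j)) Finset.univ_nonempty (by
      have := b.sum_cubeMin_coord_le hb
      simp only [Finset.sum_sub_distrib, ← Finset.mul_sum, Finset.sum_const, Finset.card_univ,
        Fintype.card_fin, nsmul_eq_mul]
      push_cast
      nlinarith)
  exact Finset.le_sup'_of_le _ (Finset.mem_univ j) hj

end AffineBasis

section IsLagrangeBasis

variable {n : ℕ} {v : Fin (n + 1) → Fin n → ℝ} {lam : Fin (n + 1) → (Fin n → ℝ) → ℝ}

lemma IsLagrangeBasis.affineIndependent (h : IsLagrangeBasis v lam) : AffineIndependent ℝ v := by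
  rw [affineIndependent_iff]
  intro s μ hμ hμv k hk
  have := (h.1 k).apply_sum_smul s μ v
  simp only [h.2, mul_ite, mul_one, mul_zero, Finset.sum_ite_eq, hk, if_true, hμv, hμ,
    sub_zero, one_mul] at this
  linarith

lemma IsLagrangeBasis.coord_eq {b : AffineBasis (Fin (n + 1)) ℝ (Fin n → ℝ)}
    (h : IsLagrangeBasis b lam) (j : Fin (n + 1)) : ⇑(b.coord j) = lam j := by
  funext x
  have := (h.1 j).apply_sum_smul Finset.univ (fun k => b.coord k x) b
  simp only [b.linear_combination_coord_eq_self, h.2, mul_ite, mul_one, mul_zero,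
    Finset.sum_ite_eq, Finset.mem_univ, if_true, b.sum_coord_apply_eq_one, sub_self,
    zero_mul, add_zero] at this
  exact this.symm

end IsLagrangeBasis

def affineBasisOfAffineIndependent {n : ℕ} {v : Fin (n + 1) → Fin n → ℝ}
    (hv : AffineIndependent ℝ v) : AffineBasis (Fin (n + 1)) ℝ (Fin n → ℝ) :=
  ⟨v, hv, hv.affineSpan_eq_top_iff_card_eq_finrank_add_one.2 (by simp)⟩

/-- Row `j`, with constant term `S9const j`, is the basic Lagrange polynomial `λⱼ` of `S(t)`:
together they form the inverse of the matrix with columns `(S9verts t k, 1)`. -/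
noncomputable def S9coeff (t : ℝ) : Fin 10 → Fin 9 → ℝ :=
  ![![3/5 - t, t - 3/5, 2/5 - t, t - 3/5, -1, 2/5 - t, t - 3/5, 2/5 - t, t - 2/5],
    ![1/5, 1/5, -1/5, 3/5, 0, 1/5, 0, -2/5, 0],
    ![2/5, -1/5, 3/5, 0, 0, -1/5, 1/5, 0, -1/5],
    ![0, 3/5, 0, 1/5, 0, -2/5, -1/5, 1/5, 1/5],
    ![-1/5, 0, 1/5, -1/5, 0, 0, -2/5, -1/5, -3/5],
    ![-3/5, -1/5, -2/5, 0, 0, -1/5, 1/5, 0, -1/5],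
    ![1/5, 1/5, -1/5, -2/5, 0, 1/5, 0, 3/5, 0],
    ![-1/5, 0, 1/5, -1/5, 0, 0, 3/5, -1/5, 2/5],
    ![0, -2/5, 0, 1/5, 0, 3/5, -1/5, 1/5, 1/5],
    ![t - 2/5, 2/5 - t, t - 3/5, 2/5 - t, 1, t - 3/5, 2/5 - t, t - 3/5, 3/5 - t]]

noncomputable def S9const : Fin 10 → ℝ := ![4/5, -1/5, -1/5, -1/5, 4/5, 4/5, -1/5, -1/5, -1/5, -1/5]

noncomputable def S9lagrange (t : ℝ) (j : Fin 10) (x : Fin 9 → ℝ) : ℝ :=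
  ∑ i, S9coeff t j i * x i + S9const j

lemma isLagrangeBasis_S9lagrange (t : ℝ) : IsLagrangeBasis (S9verts t) (S9lagrange t) := by
  refine ⟨fun j => ⟨_, _, fun _ => rfl⟩, fun j k => ?_⟩
  fin_cases j <;> fin_cases k <;>
    simp only [S9lagrange, S9coeff, S9const, S9verts, Fin.sum_univ_succ, Fin.sum_univ_zero,
      Matrix.cons_val', Matrix.cons_val, Matrix.cons_val_fin_one, Matrix.cons_val_zero,
      Matrix.cons_val_one, Matrix.cons_val_succ, Fin.reduceFinMk, Fin.isValue, Fin.reduceEq,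
      Fin.zero_eta, Fin.mk_one, ↓reduceIte] <;>
    ring

lemma S9verts_mem_unitCube {t : ℝ} (ht : t ∈ Set.Icc (2/5 : ℝ) (3/5)) (k : Fin 10) :
    S9verts t k ∈ unitCube 9 := by
  have h0 : 0 ≤ t := by linarith [ht.1]
  have h1 : t ≤ 1 := by linarith [ht.2]
  intro i
  fin_cases k <;> fin_cases i <;> simp [S9verts, h0, h1]

lemma neg_four_fifths_le_cubeMin_S9lagrange {t : ℝ} (ht : t ∈ Set.Icc (2/5 : ℝ) (3/5))
    (j : Fin 10) : -(4/5) ≤ cubeMin (S9lagrange t j) := by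
  have h1 : 0 ≤ t - 2/5 := by linarith [ht.1]
  have h2 : 2/5 - t ≤ 0 := by linarith [ht.1]
  have h3 : 0 ≤ 3/5 - t := by linarith [ht.2]
  have h4 : t - 3/5 ≤ 0 := by linarith [ht.2]
  rw [cubeMin_eq (f := S9lagrange t j) fun _ => rfl]
  fin_cases j <;>
    norm_num [S9coeff, S9const, Fin.sum_univ_succ, negPart_eq_zero.2, negPart_eq_neg.2,
      h1, h2, h3, h4] <;>
    linarith

lemma simplexSet_subset_unitCube {n : ℕ} {v : Fin (n + 1) → Fin n → ℝ}
    (hv : ∀ k, v k ∈ unitCube n) : simplexSet v ⊆ unitCube n := by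
  rw [simplexSet, unitCube_eq_Icc]
  exact convexHull_min (Set.range_subset_iff.2 fun k => unitCube_eq_Icc n ▸ hv k) (convex_Icc 0 1)

lemma xiVal_S9verts {t : ℝ} (ht : t ∈ Set.Icc (2/5 : ℝ) (3/5)) : xiVal (S9verts t) = 9 := by
  let b := affineBasisOfAffineIndependent (isLagrangeBasis_S9lagrange t).affineIndependent
  have hlag : IsLagrangeBasis b (S9lagrange t) := isLagrangeBasis_S9lagrange t
  change xiVal b = 9
  refine le_antisymm ?_ (by exact_mod_cast b.natCast_le_xiVal (S9verts_mem_unitCube ht))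
  rw [b.xiVal_eq]
  refine max_le (by norm_num) (Finset.sup'_le _ _ fun j _ => ?_)
  rw [hlag.coord_eq j]
  push_cast
  linarith [neg_four_fifths_le_cubeMin_S9lagrange ht j]

/-- `ξ₉ = 9`: for `t ∈ [2/5, 3/5]` the simplex `S(t)` is contained in `Q₉` with
`ξ(S(t)) = 9`, and every nondegenerate simplex `T ⊆ Q₉` satisfies `ξ(T) ≥ 9`. -/
theorem xi_9_eq_9 :
    (∀ t ∈ Set.Icc (2/5 : ℝ) (3/5),
      simplexSet (S9verts t) ⊆ unitCube 9 ∧ xiVal (S9verts t) = 9) ∧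
    (∀ w : Fin 10 → (Fin 9 → ℝ), AffineIndependent ℝ w →
      simplexSet w ⊆ unitCube 9 → (9 : ℝ) ≤ xiVal w) := by
  refine ⟨fun t ht => ⟨simplexSet_subset_unitCube (S9verts_mem_unitCube ht), xiVal_S9verts ht⟩,
    fun w hw hsub => ?_⟩
  exact_mod_cast (affineBasisOfAffineIndependent hw).natCast_le_xiVal
    fun k => hsub (subset_convexHull ℝ _ (Set.mem_range_self k))
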